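/- arXiv:1410.7632 — 5 statements merged into one kernel-verified Lean document; each statement's English description precedes it below -/
import Mathlib

section
/- Let γ : ℝ → ℝ² be a twice continuously differentiable curve parameterized by arc length (i.e. ‖γ'(s)‖ = 1 for all s) whose curvature is bounded by κ ≥ 0 (i.e. ‖γ''(s)‖ ≤ κ for all s). Then for all s_i, s_j ∈ ℝ, the chord length satisfies ‖γ(s_j) − γ(s_i)‖ ≥ |s_j − s_i| − (κ/2)·(s_j − s_i)². -/
/-!
Compare `γ` with its tangent line at the earlier endpoint `a`. The curvature bound makes `γ'` move
by at most `κ (s - a)` away from `γ' a`, so integrating, `γ` stays within `κ/2 (b - a)²` of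
`γ a + (b - a) γ' a`; since `γ' a` is a unit vector, the chord is at least `(b - a) - κ/2 (b - a)²`.
-/

open Set

section TangentLine

variable {E : Type*} [NormedAddCommGroup E] [NormedSpace ℝ E]

theorem norm_sub_sub_smul_le_of_norm_deriv_sub_le {f f' : ℝ → E} {a b κ : ℝ} (hab : a ≤ b)
    (hf : ∀ s ∈ Icc a b, HasDerivAt f (f' s) s)
    (hf' : ∀ s ∈ Icc a b, ‖f' s - f' a‖ ≤ κ * (s - a)) :
    ‖f b - f a - (b - a) • f' a‖ ≤ κ / 2 * (b - a) ^ 2 := by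
  set g : ℝ → E := fun s => f s - f a - (s - a) • f' a
  have hg : ∀ s ∈ Icc a b, HasDerivAt g (f' s - f' a) s := fun s hs =>
    (((hf s hs).sub_const (f a)).sub
      (((hasDerivAt_id s).sub_const a).smul_const (f' a))).congr_deriv (by rw [one_smul])
  have hB : ∀ s, HasDerivAt (fun s => κ / 2 * (s - a) ^ 2) (κ * (s - a)) s := fun s =>
    ((((hasDerivAt_id s).sub_const a).pow 2).const_mul (κ / 2)).congr_deriv (by
      simp only [id, Nat.cast_ofNat, Nat.add_one_sub_one, pow_one, mul_one]
      ring)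
  refine image_norm_le_of_norm_deriv_right_le_deriv_boundary (f := g)
    (fun s hs => (hg s hs).continuousAt.continuousWithinAt)
    (fun s hs => (hg s (Ico_subset_Icc_self hs)).hasDerivWithinAt) (by simp [g]) hB
    (fun s hs => hf' s (Ico_subset_Icc_self hs)) (right_mem_Icc.mpr hab)

theorem sub_mul_norm_deriv_sub_le_norm_sub {f : ℝ → E} {a b κ : ℝ} (hab : a ≤ b)
    (hf : Differentiable ℝ f) (hf' : Differentiable ℝ (deriv f))
    (hf'' : ∀ s, ‖deriv (deriv f) s‖ ≤ κ) :
    (b - a) * ‖deriv f a‖ - κ / 2 * (b - a) ^ 2 ≤ ‖f b - f a‖ := by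
  have hlip : ∀ s ∈ Icc a b, ‖deriv f s - deriv f a‖ ≤ κ * (s - a) :=
    norm_image_sub_le_of_norm_deriv_le_segment' (fun s _ => (hf' s).hasDerivAt.hasDerivWithinAt)
      (fun s _ => hf'' s)
  have htangent := norm_sub_sub_smul_le_of_norm_deriv_sub_le hab
    (fun s _ => (hf s).hasDerivAt) hlip
  have hreverse := norm_sub_norm_le ((b - a) • deriv f a) (f b - f a)
  rw [norm_smul, Real.norm_of_nonneg (sub_nonneg.mpr hab), norm_sub_rev ((b - a) • _)] at hreverse
  linarith

end TangentLine

theorem icp_chord_length_lower_bound_general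
    (γ : ℝ → EuclideanSpace ℝ (Fin 2)) (κ : ℝ)
    (hγ : ContDiff ℝ 2 γ)
    (hspeed : ∀ s, ‖deriv γ s‖ = 1)
    (hcurv : ∀ s, ‖deriv (deriv γ) s‖ ≤ κ)
    (s_i s_j : ℝ) :
    ‖γ s_j - γ s_i‖ ≥ |s_j - s_i| - κ / 2 * (s_j - s_i) ^ 2 := by
  have hγ' : ContDiff ℝ 1 (deriv γ) := hγ.iterate_deriv' 1 1
  have hchord : ∀ a b, a ≤ b → b - a - κ / 2 * (b - a) ^ 2 ≤ ‖γ b - γ a‖ := fun a b hab => by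
    simpa [hspeed] using sub_mul_norm_deriv_sub_le_norm_sub hab
      (hγ.differentiable two_ne_zero) (hγ'.differentiable one_ne_zero) hcurv
  rcases le_total s_i s_j with h | h
  · rw [abs_of_nonneg (sub_nonneg.mpr h)]
    exact hchord s_i s_j h
  · rw [abs_of_nonpos (sub_nonpos.mpr h), norm_sub_rev, neg_sub, ← neg_sub s_i s_j, neg_sq]
    exact hchord s_j s_i h

/-- Chord-length lower bound: for a unit-speed C² planar curve with curvature
bounded by κ, the chord length satisfies
`‖γ(s_j) - γ(s_i)‖ ≥ |s_j - s_i| - (κ/2)·(s_j - s_i)²`. -/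
theorem icp_chord_length_lower_bound
    (γ : ℝ → EuclideanSpace ℝ (Fin 2)) (κ : ℝ) (hκ : 0 ≤ κ)
    (hγ : ContDiff ℝ 2 γ)
    (hspeed : ∀ s, ‖deriv γ s‖ = 1)
    (hcurv : ∀ s, ‖deriv (deriv γ) s‖ ≤ κ)
    (s_i s_j : ℝ) :
    ‖γ s_j - γ s_i‖ ≥ |s_j - s_i| - κ / 2 * (s_j - s_i) ^ 2 :=
  icp_chord_length_lower_bound_general γ κ hγ hspeed hcurv s_i s_j
end

section
/- Let γ : ℝ → ℝ² be a twice continuously differentiable curve parameterized by arc length (i.e. ‖γ'(s)‖ = 1 for all s) whose curvature is bounded by κ ≥ 0 (i.e. ‖γ''(s)‖ ≤ κ for all s). If s_i, s_j ∈ ℝ satisfy κ·|s_j − s_i| ≤ 1, then ‖γ(s_j) − γ(s_i)‖ ≥ (1/2)·|s_j − s_i|. -/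
/-!
Let `v = γ'(a)`. Since `‖γ''‖ ≤ κ`, the unit tangent drifts from `v` by at most `κ (s - a)`, so
`⟪v, γ'(s)⟫ ≥ 1 - κ (s - a)`. Hence `s ↦ ⟪v, γ(s)⟫ - (s - a) + κ (s - a)² / 2` is nondecreasing
on `[a, ∞)`, and the chord `γ(b) - γ(a)` has component at least `L - κ L² / 2` along `v`, where
`L = b - a`; this is `≥ L / 2` as soon as `κ L ≤ 1`.
-/

open Set
open scoped InnerProductSpace

variable {E : Type*} [NormedAddCommGroup E] [InnerProductSpace ℝ E]

theorem one_sub_norm_sub_le_inner {u v : E} (hv : ‖v‖ = 1) : 1 - ‖u - v‖ ≤ ⟪v, u⟫_ℝ := by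
  have h := real_inner_le_norm v (v - u)
  rw [inner_sub_right, real_inner_self_eq_norm_sq, hv, norm_sub_rev] at h
  linarith

theorem sub_sub_mul_sq_div_two_le_norm_sub {γ : ℝ → E} {κ a b : ℝ} (hγ : Differentiable ℝ γ)
    (hspeed : ‖deriv γ a‖ = 1)
    (hdrift : ∀ s, a ≤ s → ‖deriv γ s - deriv γ a‖ ≤ κ * (s - a)) (hab : a ≤ b) :
    (b - a) - κ * (b - a) ^ 2 / 2 ≤ ‖γ b - γ a‖ := by
  set v := deriv γ a
  let g : ℝ → ℝ := fun s => ⟪v, γ s⟫_ℝ - (s - a) + κ * (s - a) ^ 2 / 2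
  have hg : ∀ s, HasDerivAt g (⟪v, deriv γ s⟫_ℝ - 1 + κ * (s - a)) s := by
    intro s
    have hinner : HasDerivAt (fun t => ⟪v, γ t⟫_ℝ) ⟪v, deriv γ s⟫_ℝ s :=
      (innerSL ℝ v).hasFDerivAt.comp_hasDerivAt s (hγ s).hasDerivAt
    have hlin := (hasDerivAt_id' s).sub_const a
    refine ((hinner.sub hlin).add ((hlin.pow 2).const_mul κ |>.div_const 2)).congr_deriv ?_
    ring
  have hg_mono : MonotoneOn g (Ici a) := by
    refine monotoneOn_of_hasDerivWithinAt_nonneg (convex_Ici a)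
      (fun s _ => (hg s).continuousAt.continuousWithinAt) (fun s _ => (hg s).hasDerivWithinAt)
      fun s hs => ?_
    rw [interior_Ici] at hs
    linarith [one_sub_norm_sub_le_inner (u := deriv γ s) hspeed, hdrift s hs.le]
  have hgab : g a ≤ g b := hg_mono self_mem_Ici hab hab
  have hcs : ⟪v, γ b - γ a⟫_ℝ ≤ ‖γ b - γ a‖ := by
    simpa [hspeed] using real_inner_le_norm v (γ b - γ a)
  simp only [g, sub_self, inner_sub_right] at hgab hcs
  linarith

theorem half_mul_sub_le_norm_sub_of_norm_deriv_deriv_le {γ : ℝ → E} {κ a b : ℝ}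
    (hγ : Differentiable ℝ γ) (hγ' : Differentiable ℝ (deriv γ))
    (hspeed : ∀ s, ‖deriv γ s‖ = 1) (hcurv : ∀ s, ‖deriv (deriv γ) s‖ ≤ κ)
    (hab : a ≤ b) (hsep : κ * (b - a) ≤ 1) :
    1 / 2 * (b - a) ≤ ‖γ b - γ a‖ := by
  have hdrift : ∀ s, a ≤ s → ‖deriv γ s - deriv γ a‖ ≤ κ * (s - a) := fun s has => by
    simpa [Real.norm_of_nonneg (sub_nonneg.2 has)] using
      convex_univ.norm_image_sub_le_of_norm_deriv_le (fun x _ => hγ' x) (fun x _ => hcurv x)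
        (mem_univ a) (mem_univ s)
  have h := sub_sub_mul_sq_div_two_le_norm_sub hγ (hspeed a) hdrift hab
  nlinarith [mul_nonneg (sub_nonneg.2 hab) (sub_nonneg.2 hsep)]

theorem icp_chord_length_half_bound_general
    (γ : ℝ → EuclideanSpace ℝ (Fin 2)) (κ : ℝ)
    (hγ : ContDiff ℝ 2 γ)
    (hspeed : ∀ s, ‖deriv γ s‖ = 1)
    (hcurv : ∀ s, ‖deriv (deriv γ) s‖ ≤ κ)
    (s_i s_j : ℝ) (hsep : κ * |s_j - s_i| ≤ 1) :
    ‖γ s_j - γ s_i‖ ≥ (1 / 2) * |s_j - s_i| := by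
  have hγ1 : Differentiable ℝ γ := hγ.differentiable (by norm_num)
  have hγ2 : Differentiable ℝ (deriv γ) :=
    ((contDiff_succ_iff_deriv (n := 1)).1 hγ).2.2.differentiable one_ne_zero
  rcases le_total s_i s_j with h | h
  · rw [abs_of_nonneg (sub_nonneg.2 h)] at hsep ⊢
    exact half_mul_sub_le_norm_sub_of_norm_deriv_deriv_le hγ1 hγ2 hspeed hcurv h hsep
  · rw [abs_sub_comm, abs_of_nonneg (sub_nonneg.2 h)] at hsep ⊢
    rw [norm_sub_rev]
    exact half_mul_sub_le_norm_sub_of_norm_deriv_deriv_le hγ1 hγ2 hspeed hcurv h hsep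

/-- If the arc-length separation of two points on a unit-speed C² planar curve
with curvature bounded by κ is at most one curvature radius (`κ·|s_j - s_i| ≤ 1`),
then the chord length is at least half the arc-length separation. -/
theorem icp_chord_length_half_bound
    (γ : ℝ → EuclideanSpace ℝ (Fin 2)) (κ : ℝ) (hκ : 0 ≤ κ)
    (hγ : ContDiff ℝ 2 γ)
    (hspeed : ∀ s, ‖deriv γ s‖ = 1)
    (hcurv : ∀ s, ‖deriv (deriv γ) s‖ ≤ κ)
    (s_i s_j : ℝ) (hsep : κ * |s_j - s_i| ≤ 1) :
    ‖γ s_j - γ s_i‖ ≥ (1 / 2) * |s_j - s_i| :=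
  icp_chord_length_half_bound_general γ κ hγ hspeed hcurv s_i s_j hsep
end

section
/- Let γ : ℝ → ℝ² be a twice continuously differentiable curve parameterized by arc length (i.e. ‖γ'(s)‖ = 1 for all s) whose curvature is bounded by κ ≥ 0 (i.e. ‖γ''(s)‖ ≤ κ for all s). Let s_i, s_j ∈ ℝ, set a_i := γ(s_i) and a_j := γ(s_j), and let p ∈ ℝ² satisfy ‖p − a_j‖ ≤ ‖p − a_i‖. If κ·|s_i − s_j| ≤ 1, then |s_i − s_j| ≤ 4·‖p − a_i‖. -/
/-!
Project the chord `γ s - γ t` onto the initial unit tangent `v = γ'(t)`. As long as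
`κ |s - t| ≤ 1`, the tangent stays within distance `1` of `v`, so (both being unit vectors)
its component along `v` is at least `1/2`; integrating, the chord is at least half the arc
length. The triangle inequality through `p` then bounds the chord by `2 ‖p - a_i‖`.
-/

open scoped RealInnerProductSpace

variable {E : Type*} [NormedAddCommGroup E] [InnerProductSpace ℝ E]

lemma half_le_inner_of_norm_sub_le_one {u v : E} (hu : ‖u‖ = 1) (hv : ‖v‖ = 1)
    (huv : ‖u - v‖ ≤ 1) : 1 / 2 ≤ ⟪u, v⟫ := by
  have hsq : ‖u - v‖ ^ 2 = 2 - 2 * ⟪u, v⟫ := by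
    rw [norm_sub_sq_real, hu, hv]; ring
  nlinarith [norm_nonneg (u - v)]

lemma mul_sub_le_norm_sub_of_le_inner_deriv {γ : ℝ → E} (hγ : Differentiable ℝ γ)
    {v : E} (hv : ‖v‖ = 1) {c t s : ℝ} (hts : t ≤ s)
    (hc : ∀ u ∈ Set.Icc t s, c ≤ ⟪deriv γ u, v⟫) :
    c * (s - t) ≤ ‖γ s - γ t‖ := by
  have hderiv : ∀ u, HasDerivAt (fun u => ⟪γ u, v⟫) ⟪deriv γ u, v⟫ u := fun u => by
    simpa using (hγ u).hasDerivAt.inner ℝ (hasDerivAt_const u v)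
  have hdiff : Differentiable ℝ (fun u => ⟪γ u, v⟫) := fun u => (hderiv u).differentiableAt
  have hproj : c * (s - t) ≤ ⟪γ s, v⟫ - ⟪γ t, v⟫ := by
    refine (convex_Icc t s).mul_sub_le_image_sub_of_le_deriv hdiff.continuous.continuousOn
      hdiff.differentiableOn (fun u hu => ?_) t ⟨le_rfl, hts⟩ s ⟨hts, le_rfl⟩ hts
    rw [interior_Icc] at hu
    rw [(hderiv u).deriv]
    exact hc u (Set.Ioo_subset_Icc_self hu)
  calc c * (s - t) ≤ ⟪γ s - γ t, v⟫ := by rwa [inner_sub_left]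
    _ ≤ ‖γ s - γ t‖ * ‖v‖ := real_inner_le_norm _ _
    _ = ‖γ s - γ t‖ := by rw [hv, mul_one]

lemma abs_sub_le_two_mul_norm_sub_of_curvature_le {γ : ℝ → E} {κ : ℝ}
    (hγ : Differentiable ℝ γ) (hγ' : Differentiable ℝ (deriv γ))
    (hspeed : ∀ s, ‖deriv γ s‖ = 1) (hcurv : ∀ s, ‖deriv (deriv γ) s‖ ≤ κ)
    {s t : ℝ} (hsep : κ * |s - t| ≤ 1) :
    |s - t| ≤ 2 * ‖γ s - γ t‖ := by
  wlog hts : t ≤ s generalizing s t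
  · rw [abs_sub_comm, norm_sub_rev]
    exact this (by rwa [abs_sub_comm]) (le_of_not_ge hts)
  have hκ : 0 ≤ κ := (norm_nonneg _).trans (hcurv t)
  have htangent : ∀ u ∈ Set.Icc t s, 1 / 2 ≤ ⟪deriv γ u, deriv γ t⟫ := by
    intro u hu
    refine half_le_inner_of_norm_sub_le_one (hspeed u) (hspeed t) ?_
    have hdist : ‖u - t‖ ≤ |s - t| := by
      rw [Real.norm_eq_abs, abs_of_nonneg (sub_nonneg.2 hu.1), abs_of_nonneg (sub_nonneg.2 hts)]
      linarith [hu.2]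
    calc ‖deriv γ u - deriv γ t‖ ≤ κ * ‖u - t‖ :=
          convex_univ.norm_image_sub_le_of_norm_deriv_le (fun x _ => hγ' x)
            (fun x _ => hcurv x) trivial trivial
      _ ≤ κ * |s - t| := mul_le_mul_of_nonneg_left hdist hκ
      _ ≤ 1 := hsep
  have hchord := mul_sub_le_norm_sub_of_le_inner_deriv hγ (hspeed t) hts htangent
  rw [abs_of_nonneg (sub_nonneg.2 hts)]
  linarith

theorem icp_rematching_arclength_bound_general
    (γ : ℝ → EuclideanSpace ℝ (Fin 2)) (κ : ℝ)
    (hγ : ContDiff ℝ 2 γ)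
    (hspeed : ∀ s, ‖deriv γ s‖ = 1)
    (hcurv : ∀ s, ‖deriv (deriv γ) s‖ ≤ κ)
    (s_i s_j : ℝ) (a_i a_j : EuclideanSpace ℝ (Fin 2))
    (ha_i : a_i = γ s_i) (ha_j : a_j = γ s_j)
    (p : EuclideanSpace ℝ (Fin 2))
    (hp : ‖p - a_j‖ ≤ ‖p - a_i‖)
    (hsep : κ * |s_i - s_j| ≤ 1) :
    |s_i - s_j| ≤ 4 * ‖p - a_i‖ := by
  subst ha_i ha_j
  have hchord : |s_i - s_j| ≤ 2 * ‖γ s_i - γ s_j‖ :=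
    abs_sub_le_two_mul_norm_sub_of_curvature_le (hγ.differentiable (by norm_num))
      hγ.differentiable_deriv_two hspeed hcurv hsep
  have htri : ‖γ s_i - γ s_j‖ ≤ ‖p - γ s_j‖ + ‖p - γ s_i‖ := by
    simpa using norm_sub_le (p - γ s_j) (p - γ s_i)
  linarith

/-- Rematching lemma: if the displaced point `p` is at least as close to
`a_j = γ(s_j)` as to `a_i = γ(s_i)` and the arc-length separation is at most one
curvature radius, then `|s_i - s_j| ≤ 4·‖p - a_i‖`. -/
theorem icp_rematching_arclength_bound
    (γ : ℝ → EuclideanSpace ℝ (Fin 2)) (κ : ℝ) (hκ : 0 ≤ κ)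
    (hγ : ContDiff ℝ 2 γ)
    (hspeed : ∀ s, ‖deriv γ s‖ = 1)
    (hcurv : ∀ s, ‖deriv (deriv γ) s‖ ≤ κ)
    (s_i s_j : ℝ) (a_i a_j : EuclideanSpace ℝ (Fin 2))
    (ha_i : a_i = γ s_i) (ha_j : a_j = γ s_j)
    (p : EuclideanSpace ℝ (Fin 2))
    (hp : ‖p - a_j‖ ≤ ‖p - a_i‖)
    (hsep : κ * |s_i - s_j| ≤ 1) :
    |s_i - s_j| ≤ 4 * ‖p - a_i‖ :=
  icp_rematching_arclength_bound_general γ κ hγ hspeed hcurv s_i s_j a_i a_j ha_i ha_j p hp hsep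
end

section
/- Let γ : ℝ → ℝ² be a twice continuously differentiable curve parameterized by arc length (i.e. ‖γ'(s)‖ = 1 for all s) whose curvature is bounded by κ ≥ 0 (i.e. ‖γ''(s)‖ ≤ κ for all s). Let s_i, s_j ∈ ℝ with κ·|s_i − s_j| ≤ 1, set a_i := γ(s_i) and a_j := γ(s_j), let n ∈ ℝ² be a unit vector with γ'(s_i) ⬝ n = 0, and let p ∈ ℝ² satisfy ‖p − a_j‖ ≤ ‖p − a_i‖. Then the approximation error ψ := (a_i − a_j) ⬝ n satisfies |ψ| ≤ 8·κ·‖p − a_i‖². -/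
open RealInnerProductSpace Set

/-! Taylor's formula with the curvature bound gives `γ s_j - γ s_i = (s_j - s_i) • γ'(s_i) + R`
with `‖R‖ ≤ κ/2 (s_j - s_i)²`. Pairing with the normal `n` kills the linear term, so
`|ψ| ≤ κ/2 (s_j - s_i)²`. Taking norms instead, `κ |s_j - s_i| ≤ 1` makes the remainder at most
half the linear term, so the parameter gap is at most twice the chord `‖a_j - a_i‖`; and the chord
is at most `2 ‖p - a_i‖` because `p` is closer to `a_j` than to `a_i`. -/

section Taylor

variable {E : Type*} [NormedAddCommGroup E] [NormedSpace ℝ E] {g g' : ℝ → E} {a C : ℝ}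

lemma norm_le_half_mul_sq_of_norm_deriv_le_mul_sub_of_le (hg : ∀ t, HasDerivAt g (g' t) t)
    (ha : g a = 0) (hbound : ∀ t, ‖g' t‖ ≤ C * |t - a|) {t : ℝ} (hat : a ≤ t) :
    ‖g t‖ ≤ C / 2 * (t - a) ^ 2 := by
  have hB : ∀ x, HasDerivAt (fun x => C / 2 * (x - a) ^ 2) (C * (x - a)) x := fun x =>
    ((((hasDerivAt_id' x).sub_const a).fun_pow 2).const_mul (C / 2)).congr_deriv (by norm_num; ring)
  refine image_norm_le_of_norm_deriv_right_le_deriv_boundary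
    (fun x _ => (hg x).continuousAt.continuousWithinAt) (fun x _ => (hg x).hasDerivWithinAt)
    (by simp [ha]) hB (fun x hx => ?_) ⟨hat, le_rfl⟩
  simpa [abs_of_nonneg (sub_nonneg.2 hx.1)] using hbound x

lemma norm_le_half_mul_sq_of_norm_deriv_le_mul_abs (hg : ∀ t, HasDerivAt g (g' t) t)
    (ha : g a = 0) (hbound : ∀ t, ‖g' t‖ ≤ C * |t - a|) (t : ℝ) :
    ‖g t‖ ≤ C / 2 * (t - a) ^ 2 := by
  rcases le_total a t with hat | hta
  · exact norm_le_half_mul_sq_of_norm_deriv_le_mul_sub_of_le hg ha hbound hat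
  -- reflect through `t ↦ -t` to reduce to the case `a ≤ t`
  · have hreflect := norm_le_half_mul_sq_of_norm_deriv_le_mul_sub_of_le (g := fun s => g (-s))
      (g' := fun s => -g' (-s)) (a := -a) (C := C)
      (fun s => by simpa [Function.comp_def] using (hg (-s)).scomp s (hasDerivAt_neg s))
      (by simpa using ha) (fun s => by simpa [abs_sub_comm, add_comm] using hbound (-s))
      (neg_le_neg hta)
    calc ‖g t‖ ≤ C / 2 * (-t - -a) ^ 2 := by simpa using hreflect
      _ = C / 2 * (t - a) ^ 2 := by ring

variable {f : ℝ → E}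

theorem norm_sub_sub_smul_deriv_le_of_norm_deriv_deriv_le (hf : ContDiff ℝ 2 f)
    (hC : ∀ s, ‖deriv (deriv f) s‖ ≤ C) (a b : ℝ) :
    ‖f b - f a - (b - a) • deriv f a‖ ≤ C / 2 * (b - a) ^ 2 := by
  obtain ⟨hf_diff, -, hf'⟩ := contDiff_succ_iff_deriv.mp (show ContDiff ℝ (1 + 1) f from hf)
  have hderiv : ∀ t, HasDerivAt (fun t => f t - f a - (t - a) • deriv f a)
      (deriv f t - deriv f a) t := fun t => by
    simpa using ((hf_diff t).hasDerivAt.sub_const (f a)).fun_sub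
      (((hasDerivAt_id' t).sub_const a).smul_const (deriv f a))
  have hlip : ∀ t, ‖deriv f t - deriv f a‖ ≤ C * |t - a| := fun t => by
    simpa [Real.norm_eq_abs] using convex_univ.norm_image_sub_le_of_norm_deriv_le
      (fun x _ => (hf'.differentiable one_ne_zero) x) (fun x _ => hC x) (mem_univ a) (mem_univ t)
  simpa using norm_le_half_mul_sq_of_norm_deriv_le_mul_abs hderiv (by simp) hlip b

theorem abs_sub_le_two_mul_norm_sub_of_norm_deriv_eq_one (hf : ContDiff ℝ 2 f)
    (hC : ∀ s, ‖deriv (deriv f) s‖ ≤ C) {a b : ℝ} (hspeed : ‖deriv f a‖ = 1)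
    (hab : C * |a - b| ≤ 1) :
    |a - b| ≤ 2 * ‖f b - f a‖ := by
  have htaylor := norm_sub_sub_smul_deriv_le_of_norm_deriv_deriv_le hf hC a b
  have hlinear : ‖(b - a) • deriv f a‖ = |a - b| := by
    rw [norm_smul, hspeed, mul_one, Real.norm_eq_abs, abs_sub_comm]
  have hsq : C / 2 * (b - a) ^ 2 = C * |a - b| * |a - b| / 2 := by
    rw [← sq_abs, abs_sub_comm]; ring
  have hremainder : C / 2 * (b - a) ^ 2 ≤ |a - b| / 2 := by
    rw [hsq]; nlinarith [abs_nonneg (a - b)]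
  have := norm_le_insert' ((b - a) • deriv f a) (f b - f a)
  linarith [norm_sub_rev ((b - a) • deriv f a) (f b - f a)]

end Taylor

theorem abs_inner_sub_le_of_inner_deriv_eq_zero {F : Type*} [NormedAddCommGroup F]
    [InnerProductSpace ℝ F] {f : ℝ → F} {C : ℝ} (hf : ContDiff ℝ 2 f)
    (hC : ∀ s, ‖deriv (deriv f) s‖ ≤ C) {a : ℝ} {n : F} (hperp : ⟪deriv f a, n⟫ = 0) (b : ℝ) :
    |⟪f b - f a, n⟫| ≤ C / 2 * (b - a) ^ 2 * ‖n‖ := by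
  have hnormal : ⟪f b - f a, n⟫ = ⟪f b - f a - (b - a) • deriv f a, n⟫ := by
    rw [inner_sub_left (f b - f a), real_inner_smul_left, hperp, mul_zero, sub_zero]
  rw [hnormal]
  exact (abs_real_inner_le_norm _ _).trans <| mul_le_mul_of_nonneg_right
    (norm_sub_sub_smul_deriv_le_of_norm_deriv_deriv_le hf hC a b) (norm_nonneg n)

theorem icp_point_to_plane_discrepancy_bound_general
    (γ : ℝ → EuclideanSpace ℝ (Fin 2)) (κ : ℝ)
    (hγ : ContDiff ℝ 2 γ)
    (hspeed : ∀ s, ‖deriv γ s‖ = 1)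
    (hcurv : ∀ s, ‖deriv (deriv γ) s‖ ≤ κ)
    (s_i s_j : ℝ) (hsep : κ * |s_i - s_j| ≤ 1)
    (a_i a_j : EuclideanSpace ℝ (Fin 2))
    (ha_i : a_i = γ s_i) (ha_j : a_j = γ s_j)
    (n : EuclideanSpace ℝ (Fin 2)) (hn : ‖n‖ = 1) (hperp : ⟪deriv γ s_i, n⟫ = 0)
    (p : EuclideanSpace ℝ (Fin 2)) (hp : ‖p - a_j‖ ≤ ‖p - a_i‖)
    (ψ : ℝ) (hψ : ψ = ⟪a_i - a_j, n⟫) :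
    |ψ| ≤ 8 * κ * ‖p - a_i‖ ^ 2 := by
  subst ha_i ha_j hψ
  have hκ : 0 ≤ κ := (norm_nonneg _).trans (hcurv 0)
  have hnormal := abs_inner_sub_le_of_inner_deriv_eq_zero hγ hcurv hperp s_j
  have harc := abs_sub_le_two_mul_norm_sub_of_norm_deriv_eq_one hγ hcurv (hspeed s_i) hsep
  have hchord : ‖γ s_j - γ s_i‖ ≤ 2 * ‖p - γ s_i‖ := by
    have := norm_sub_le_norm_sub_add_norm_sub (γ s_j) p (γ s_i)
    linarith [norm_sub_rev (γ s_j) p]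
  have hsq : (s_j - s_i) ^ 2 ≤ (4 * ‖p - γ s_i‖) ^ 2 := by
    rw [← sq_abs, abs_sub_comm]
    exact pow_le_pow_left₀ (abs_nonneg _) (by linarith) 2
  calc |⟪γ s_i - γ s_j, n⟫| = |⟪γ s_j - γ s_i, n⟫| := by rw [← abs_neg, ← inner_neg_left, neg_sub]
    _ ≤ κ / 2 * (s_j - s_i) ^ 2 := by simpa [hn] using hnormal
    _ ≤ κ / 2 * (4 * ‖p - γ s_i‖) ^ 2 := by gcongr
    _ = 8 * κ * ‖p - γ s_i‖ ^ 2 := by ring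

/-- The Proposition: the term-wise discrepancy `ψ = (a_i - a_j) ⬝ n` between the
fixed-matching point-to-plane ICP cost and the true (rematched) ICP cost is
second order in the displacement: `|ψ| ≤ 8·κ·‖p - a_i‖²`. -/
theorem icp_point_to_plane_discrepancy_bound
    (γ : ℝ → EuclideanSpace ℝ (Fin 2)) (κ : ℝ) (hκ : 0 ≤ κ)
    (hγ : ContDiff ℝ 2 γ)
    (hspeed : ∀ s, ‖deriv γ s‖ = 1)
    (hcurv : ∀ s, ‖deriv (deriv γ) s‖ ≤ κ)
    (s_i s_j : ℝ) (hsep : κ * |s_i - s_j| ≤ 1)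
    (a_i a_j : EuclideanSpace ℝ (Fin 2))
    (ha_i : a_i = γ s_i) (ha_j : a_j = γ s_j)
    (n : EuclideanSpace ℝ (Fin 2)) (hn : ‖n‖ = 1) (hperp : ⟪deriv γ s_i, n⟫ = 0)
    (p : EuclideanSpace ℝ (Fin 2)) (hp : ‖p - a_j‖ ≤ ‖p - a_i‖)
    (ψ : ℝ) (hψ : ψ = ⟪a_i - a_j, n⟫) :
    |ψ| ≤ 8 * κ * ‖p - a_i‖ ^ 2 :=
  icp_point_to_plane_discrepancy_bound_general γ κ hγ hspeed hcurv s_i s_j hsep a_i a_j ha_i ha_j n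
    hn hperp p hp ψ hψ
end

section
/- Let γ : ℝ → ℝ² be a twice continuously differentiable curve parameterized by arc length (i.e. ‖γ'(s)‖ = 1 for all s) whose curvature is bounded by κ ≥ 0 (i.e. ‖γ''(s)‖ ≤ κ for all s). Let s_i, s_j ∈ ℝ with κ·|s_i − s_j| ≤ 1, set a_i := γ(s_i) and a_j := γ(s_j), let n ∈ ℝ² be a unit vector with γ'(s_i) ⬝ n = 0, let δ ∈ ℝ² be a displacement vector, and suppose the displaced point p := a_i + δ satisfies ‖p − a_j‖ ≤ ‖p − a_i‖. Then the true (rematched) point-to-plane cost term differs from the fixed-matching cost term by at most third order in ‖δ‖: |((a_i + δ − a_j) ⬝ n)² − (δ ⬝ n)²| ≤ 16·κ·‖δ‖³ + 64·κ²·‖δ‖⁴. -/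
open RealInnerProductSpace

/-!
By Taylor's theorem with the curvature bound, the chord `Δ = a_j - a_i` is the tangent step
`(s_j - s_i) γ'(s_i)` up to an error `κ (s_j - s_i)² / 2`. Rematching forces `‖Δ‖ ≤ 2 ‖δ‖`,
and unit speed together with `κ |s_j - s_i| ≤ 1` gives `|s_j - s_i| ≤ 2 ‖Δ‖`. Since `n` is
normal to the tangent, `|⟪Δ, n⟫| ≤ 8 κ ‖δ‖²`, and expanding `⟪δ - Δ, n⟫² - ⟪δ, n⟫²` yields
the bound.
-/

section NormedSpace

variable {E : Type*} [NormedAddCommGroup E] [NormedSpace ℝ E] {f f' : ℝ → E} {κ : ℝ}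

theorem norm_sub_sub_smul_le_of_lipschitz_deriv_of_le (hf : ∀ t, HasDerivAt f (f' t) t)
    (hf' : ∀ a b, ‖f' b - f' a‖ ≤ κ * |b - a|) {x y : ℝ} (hxy : x ≤ y) :
    ‖f y - f x - (y - x) • f' x‖ ≤ κ / 2 * (y - x) ^ 2 := by
  have hremainder : ∀ t, HasDerivAt (fun t => f t - f x - (t - x) • f' x) (f' t - f' x) t :=
    fun t => ((hf t).sub_const (f x)).sub
      ((((hasDerivAt_id t).sub_const x).smul_const (f' x)).congr_deriv (one_smul ℝ _))
  have hbound : ∀ t, HasDerivAt (fun t => κ / 2 * (t - x) ^ 2) (κ * (t - x)) t := fun t =>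
    ((((hasDerivAt_id t).sub_const x).pow 2).const_mul (κ / 2)).congr_deriv (by simp; ring)
  refine image_norm_le_of_norm_deriv_right_le_deriv_boundary
    (fun t _ => (hremainder t).continuousAt.continuousWithinAt)
    (fun t _ => (hremainder t).hasDerivWithinAt) (by simp) hbound
    (fun t ht => ?_) (Set.right_mem_Icc.mpr hxy)
  simpa [abs_of_nonneg (sub_nonneg.mpr ht.1)] using hf' x t

theorem norm_sub_sub_smul_le_of_lipschitz_deriv (hf : ∀ t, HasDerivAt f (f' t) t)
    (hf' : ∀ a b, ‖f' b - f' a‖ ≤ κ * |b - a|) (x y : ℝ) :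
    ‖f y - f x - (y - x) • f' x‖ ≤ κ / 2 * (y - x) ^ 2 := by
  rcases le_total x y with hxy | hyx
  · exact norm_sub_sub_smul_le_of_lipschitz_deriv_of_le hf hf' hxy
  · have hreflect : ∀ t, HasDerivAt (fun t => f (-t)) (-f' (-t)) t := fun t => by
      simpa [Function.comp_def] using (hf (-t)).scomp t (hasDerivAt_neg t)
    have hreflect' : ∀ a b, ‖-f' (-b) - -f' (-a)‖ ≤ κ * |b - a| := fun a b => by
      simpa [← sub_eq_neg_add, abs_sub_comm] using hf' (-b) (-a)
    have h := norm_sub_sub_smul_le_of_lipschitz_deriv_of_le hreflect hreflect' (neg_le_neg hyx)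
    rwa [neg_neg, neg_neg, smul_neg, neg_sub_neg, ← neg_sub y x, neg_smul, neg_neg, neg_sq] at h

theorem norm_deriv_sub_le_of_norm_deriv_deriv_le {γ : ℝ → E} (hγ : ContDiff ℝ 2 γ)
    (hcurv : ∀ s, ‖deriv (deriv γ) s‖ ≤ κ) (a b : ℝ) :
    ‖deriv γ b - deriv γ a‖ ≤ κ * |b - a| := by
  simpa using convex_univ.norm_image_sub_le_of_norm_deriv_le
    (fun t _ => hγ.differentiable_deriv_two t) (fun t _ => hcurv t)
    (Set.mem_univ a) (Set.mem_univ b)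

theorem abs_le_two_mul_norm_of_norm_sub_smul_le {Δ t : E} {d : ℝ} (ht : ‖t‖ = 1)
    (hκd : κ * |d| ≤ 1) (hΔ : ‖Δ - d • t‖ ≤ κ / 2 * d ^ 2) :
    |d| ≤ 2 * ‖Δ‖ := by
  have hsmall : κ / 2 * d ^ 2 ≤ |d| / 2 := by
    rw [← sq_abs]
    nlinarith [abs_nonneg d]
  have htriangle : |d| ≤ ‖Δ‖ + ‖Δ - d • t‖ := by
    simpa [norm_smul, ht] using norm_sub_le Δ (Δ - d • t)
  linarith

end NormedSpace

theorem norm_sub_le_two_mul_of_norm_add_sub_le {G : Type*} [SeminormedAddCommGroup G]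
    {a b δ : G} (h : ‖a + δ - b‖ ≤ ‖a + δ - a‖) :
    ‖b - a‖ ≤ 2 * ‖δ‖ := by
  rw [add_sub_cancel_left] at h
  calc ‖b - a‖ = ‖δ - (a + δ - b)‖ := by congr 1; abel
    _ ≤ ‖δ‖ + ‖a + δ - b‖ := norm_sub_le _ _
    _ ≤ 2 * ‖δ‖ := by linarith

theorem abs_inner_le_of_norm_sub_smul_le {F : Type*} [NormedAddCommGroup F]
    [InnerProductSpace ℝ F] {Δ t n : F} {d r : ℝ} (hn : ‖n‖ = 1) (hperp : ⟪t, n⟫ = 0)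
    (hΔ : ‖Δ - d • t‖ ≤ r) : |⟪Δ, n⟫| ≤ r := by
  have hnormal : ⟪Δ, n⟫ = ⟪Δ - d • t, n⟫ := by
    rw [inner_sub_left, real_inner_smul_left, hperp, mul_zero, sub_zero]
  rw [hnormal]
  simpa [hn] using (abs_real_inner_le_norm (Δ - d • t) n).trans (by rw [hn, mul_one]; exact hΔ)

theorem abs_sub_sq_sub_sq_le {u w r c : ℝ} (hu : |u| ≤ r) (hw : |w| ≤ c) :
    |(u - w) ^ 2 - u ^ 2| ≤ 2 * r * c + c ^ 2 := by
  rw [abs_le]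
  constructor <;> nlinarith [abs_le.mp hu, abs_le.mp hw, abs_nonneg w]

theorem icp_point_to_plane_cost_term_bound_general
    (γ : ℝ → EuclideanSpace ℝ (Fin 2)) (κ : ℝ)
    (hγ : ContDiff ℝ 2 γ)
    (hspeed : ∀ s, ‖deriv γ s‖ = 1)
    (hcurv : ∀ s, ‖deriv (deriv γ) s‖ ≤ κ)
    (s_i s_j : ℝ) (hsep : κ * |s_i - s_j| ≤ 1)
    (a_i a_j : EuclideanSpace ℝ (Fin 2))
    (ha_i : a_i = γ s_i) (ha_j : a_j = γ s_j)
    (n : EuclideanSpace ℝ (Fin 2)) (hn : ‖n‖ = 1) (hperp : ⟪deriv γ s_i, n⟫ = 0)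
    (δ : EuclideanSpace ℝ (Fin 2)) (p : EuclideanSpace ℝ (Fin 2)) (hpdef : p = a_i + δ)
    (hp : ‖p - a_j‖ ≤ ‖p - a_i‖) :
    |(⟪a_i + δ - a_j, n⟫) ^ 2 - (⟪δ, n⟫) ^ 2| ≤
      16 * κ * ‖δ‖ ^ 3 + 64 * κ ^ 2 * ‖δ‖ ^ 4 := by
  subst ha_i ha_j hpdef
  have hκ : 0 ≤ κ := (norm_nonneg _).trans (hcurv 0)
  have hchord : ‖γ s_j - γ s_i - (s_j - s_i) • deriv γ s_i‖ ≤ κ / 2 * (s_j - s_i) ^ 2 :=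
    norm_sub_sub_smul_le_of_lipschitz_deriv
      (fun t => (hγ.differentiable two_ne_zero t).hasDerivAt)
      (norm_deriv_sub_le_of_norm_deriv_deriv_le hγ hcurv) s_i s_j
  have hstep : |s_j - s_i| ≤ 4 * ‖δ‖ := by
    have hparam := abs_le_two_mul_norm_of_norm_sub_smul_le (hspeed s_i)
      (by rwa [abs_sub_comm]) hchord
    linarith [norm_sub_le_two_mul_of_norm_add_sub_le hp]
  have hnormal : |⟪γ s_j - γ s_i, n⟫| ≤ 8 * κ * ‖δ‖ ^ 2 := by
    refine abs_inner_le_of_norm_sub_smul_le hn hperp (hchord.trans ?_)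
    calc κ / 2 * (s_j - s_i) ^ 2 = κ / 2 * |s_j - s_i| ^ 2 := by rw [sq_abs]
      _ ≤ κ / 2 * (4 * ‖δ‖) ^ 2 := by gcongr
      _ = 8 * κ * ‖δ‖ ^ 2 := by ring
  have htangent : |⟪δ, n⟫| ≤ ‖δ‖ := by simpa [hn] using abs_real_inner_le_norm δ n
  rw [show γ s_i + δ - γ s_j = δ - (γ s_j - γ s_i) by abel, inner_sub_left]
  linarith [abs_sub_sq_sub_sq_le htangent hnormal]

/-- Term-wise form of Theorem 1: after rematching of the displaced point
`p = a_i + δ` to `a_j`, the true point-to-plane cost term `((a_i + δ - a_j) ⬝ n)²`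
differs from the fixed-matching cost term `(δ ⬝ n)²` by at most third order
in `‖δ‖`. -/
theorem icp_point_to_plane_cost_term_bound
    (γ : ℝ → EuclideanSpace ℝ (Fin 2)) (κ : ℝ) (hκ : 0 ≤ κ)
    (hγ : ContDiff ℝ 2 γ)
    (hspeed : ∀ s, ‖deriv γ s‖ = 1)
    (hcurv : ∀ s, ‖deriv (deriv γ) s‖ ≤ κ)
    (s_i s_j : ℝ) (hsep : κ * |s_i - s_j| ≤ 1)
    (a_i a_j : EuclideanSpace ℝ (Fin 2))
    (ha_i : a_i = γ s_i) (ha_j : a_j = γ s_j)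
    (n : EuclideanSpace ℝ (Fin 2)) (hn : ‖n‖ = 1) (hperp : ⟪deriv γ s_i, n⟫ = 0)
    (δ : EuclideanSpace ℝ (Fin 2)) (p : EuclideanSpace ℝ (Fin 2)) (hpdef : p = a_i + δ)
    (hp : ‖p - a_j‖ ≤ ‖p - a_i‖) :
    |(⟪a_i + δ - a_j, n⟫) ^ 2 - (⟪δ, n⟫) ^ 2| ≤
      16 * κ * ‖δ‖ ^ 3 + 64 * κ ^ 2 * ‖δ‖ ^ 4 :=
  icp_point_to_plane_cost_term_bound_general γ κ hγ hspeed hcurv s_i s_j hsep a_i a_j ha_i ha_j n hn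
    hperp δ p hpdef hp
end
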